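/- Let Γ be a countable group acting on a standard Borel space X by Borel automorphisms, and let μ, ν be Borel probability measures on X. Then μ and ν agree on every Γ-invariant Borel set if and only if there is a Borel probability measure λ on Γ × X with s_*λ = μ and t_*λ = ν, where s(γ, x) = x and t(γ, x) = γx. -/

import Mathlib

open MeasureTheory Filter Set Topology

/-!
Enumerate `Γ` so that every element occurs infinitely often and transport greedily: at step `n`,
with residuals `m ≤ μ`, `m' ≤ ν` and `γ = e n`, move the largest piece `m ⊓ m'.map (γ⁻¹ • ·)`
of `m` that `γ` carries into `m'`. The moved pieces have summable mass, so the limiting residuals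
`μ'`, `ν'` satisfy `μ' ⊓ ν'.map (γ⁻¹ • ·) = 0` for every `γ`, and are therefore carried by
complementary invariant sets. Moving a piece by a group element does not change the mass of an
invariant set, so `μ'` and `ν'` still agree on invariant sets, which forces `μ' = ν' = 0`. The
pieces, tagged with the group element that moved them, form the coupling.
-/

namespace MeasureTheory.Measure

variable {X : Type*} [MeasurableSpace X]

lemma finset_sum_le_sum {ι : Type*} (K : ι → Measure X) (s : Finset ι) :
    ∑ i ∈ s, K i ≤ Measure.sum K :=
  Measure.le_iff'.2 fun t => by
    rw [finsetSum_apply]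
    exact (ENNReal.sum_le_tsum s).trans (le_sum_apply K t)

lemma map_snd_sum_map_prodMk {ι Y : Type*} [MeasurableSpace Y] (g : ι → Y) (K : ι → Measure X) :
    (Measure.sum fun i => (K i).map (fun x => (g i, x))).map Prod.snd = Measure.sum K := by
  rw [Measure.map_sum measurable_snd.aemeasurable]
  simp_rw [map_map measurable_snd measurable_prodMk_left]
  simp [Function.comp_def]

section Peeling

variable {μ : Measure X} {M K : ℕ → Measure X}

lemma add_sum_range_eq_of_sub [IsFiniteMeasure μ] (hM0 : M 0 = μ)
    (hM : ∀ n, M (n + 1) = M n - K n) (hK : ∀ n, K n ≤ M n) (n : ℕ) :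
    M n + ∑ k ∈ Finset.range n, K k = μ := by
  induction n with
  | zero => simpa using hM0
  | succ n ih =>
    have : IsFiniteMeasure (K n) :=
      isFiniteMeasure_of_le μ ((hK n).trans (ih ▸ Measure.le_add_right le_rfl))
    rw [Finset.sum_range_succ, add_comm _ (K n), ← add_assoc, hM n, sub_add_cancel_of_le (hK n),
      ih]

lemma sum_le_of_add_sum_range_eq (h : ∀ n, M n + ∑ k ∈ Finset.range n, K k = μ) :
    Measure.sum K ≤ μ :=
  Measure.le_iff'.2 fun s => by
    rw [sum_apply_of_countable]
    refine ENNReal.tsum_le_of_sum_range_le fun n => ?_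
    rw [← h n, add_apply, finsetSum_apply]
    exact le_add_self

lemma sub_sum_le_of_add_sum_range_eq (h : ∀ n, M n + ∑ k ∈ Finset.range n, K k = μ) (n : ℕ) :
    μ - Measure.sum K ≤ M n :=
  sub_le_of_le_add <| (h n).symm.le.trans <| by gcongr; exact finset_sum_le_sum K _

lemma tendsto_apply_univ_of_sum_le [IsFiniteMeasure μ] (h : Measure.sum K ≤ μ) :
    Tendsto (fun n => K n univ) atTop (𝓝 0) :=
  ENNReal.tendsto_atTop_zero_of_tsum_ne_top <| by
    rw [← sum_apply_of_countable]
    exact ((Measure.le_iff'.1 h univ).trans_lt (measure_lt_top μ univ)).ne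

end Peeling

end MeasureTheory.Measure

open Measure

section Greedy

variable {X Γ : Type*} [MeasurableSpace X] [Group Γ] [MulAction Γ X]
variable (e : ℕ → Γ) (μ ν : Measure X)

noncomputable def greedyResidual : ℕ → Measure X × Measure X
  | 0 => (μ, ν)
  | n + 1 =>
    let R := greedyResidual n
    let κ := R.1 ⊓ R.2.map ((e n)⁻¹ • ·)
    (R.1 - κ, R.2 - κ.map (e n • ·))

noncomputable def greedyPiece (n : ℕ) : Measure X :=
  (greedyResidual e μ ν n).1 ⊓ (greedyResidual e μ ν n).2.map ((e n)⁻¹ • ·)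

noncomputable def greedyImage (n : ℕ) : Measure X :=
  (greedyPiece e μ ν n).map (e n • ·)

lemma greedyPiece_le_fst (n : ℕ) : greedyPiece e μ ν n ≤ (greedyResidual e μ ν n).1 :=
  inf_le_left

lemma fst_add_sum_greedyPiece [IsFiniteMeasure μ] (n : ℕ) :
    (greedyResidual e μ ν n).1 + ∑ k ∈ Finset.range n, greedyPiece e μ ν k = μ :=
  add_sum_range_eq_of_sub (μ := μ) rfl (fun _ => rfl) (greedyPiece_le_fst e μ ν) n

variable [MeasurableConstSMul Γ X]

lemma map_smul_map_inv_smul (γ : Γ) (m : Measure X) : (m.map (γ⁻¹ • ·)).map (γ • ·) = m := by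
  rw [map_map (measurable_const_smul γ) (measurable_const_smul γ⁻¹)]
  simp [Function.comp_def]

lemma greedyImage_le_snd (n : ℕ) : greedyImage e μ ν n ≤ (greedyResidual e μ ν n).2 := by
  have := map_mono (inf_le_right : greedyPiece e μ ν n ≤ _) (measurable_const_smul (e n))
  rwa [map_smul_map_inv_smul] at this

lemma snd_add_sum_greedyImage [IsFiniteMeasure ν] (n : ℕ) :
    (greedyResidual e μ ν n).2 + ∑ k ∈ Finset.range n, greedyImage e μ ν k = ν :=
  add_sum_range_eq_of_sub (μ := ν) rfl (fun _ => rfl) (greedyImage_le_snd e μ ν) n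

lemma inf_sub_sum_greedy_eq_zero [IsFiniteMeasure μ] [IsFiniteMeasure ν]
    (he : ∀ γ, ∃ᶠ n in atTop, e n = γ) (γ : Γ) :
    (μ - Measure.sum (greedyPiece e μ ν)) ⊓
      (ν - Measure.sum (greedyImage e μ ν)).map (γ⁻¹ • ·) = 0 := by
  set ρ := (μ - Measure.sum (greedyPiece e μ ν)) ⊓
    (ν - Measure.sum (greedyImage e μ ν)).map (γ⁻¹ • ·)
  have hle : ∀ n, e n = γ → ρ univ ≤ greedyPiece e μ ν n univ := by
    rintro n rfl
    refine Measure.le_iff'.1 (le_inf (inf_le_left.trans ?_) (inf_le_right.trans ?_)) univ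
    · exact sub_sum_le_of_add_sum_range_eq (fst_add_sum_greedyPiece e μ ν) n
    · exact map_mono (sub_sum_le_of_add_sum_range_eq (snd_add_sum_greedyImage e μ ν) n)
        (measurable_const_smul _)
  have hlim :=
    tendsto_apply_univ_of_sum_le (sum_le_of_add_sum_range_eq (fst_add_sum_greedyPiece e μ ν))
  exact measure_univ_eq_zero.1 <| nonpos_iff_eq_zero.1 <|
    ge_of_tendsto_of_frequently hlim ((he γ).mono hle)

lemma greedyImage_apply_of_invariant {S : Set X} (hS : MeasurableSet S)
    (hinv : ∀ γ : Γ, (γ • ·) ⁻¹' S = S) (n : ℕ) :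
    greedyImage e μ ν n S = greedyPiece e μ ν n S := by
  rw [greedyImage, map_apply (measurable_const_smul _) hS, hinv]

lemma sub_sum_greedy_apply_eq_of_invariant [IsFiniteMeasure μ] [IsFiniteMeasure ν] {S : Set X}
    (hS : MeasurableSet S) (hinv : ∀ γ : Γ, (γ • ·) ⁻¹' S = S) (hμν : μ S = ν S) :
    (μ - Measure.sum (greedyPiece e μ ν)) S = (ν - Measure.sum (greedyImage e μ ν)) S := by
  have hμ := sum_le_of_add_sum_range_eq (fst_add_sum_greedyPiece e μ ν)
  have hν := sum_le_of_add_sum_range_eq (snd_add_sum_greedyImage e μ ν)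
  have := isFiniteMeasure_of_le μ hμ
  have := isFiniteMeasure_of_le ν hν
  rw [sub_apply hS hμ, sub_apply hS hν, sum_apply _ hS, sum_apply _ hS,
    tsum_congr (greedyImage_apply_of_invariant e μ ν hS hinv), hμν]

end Greedy

section Separation

variable {X Γ : Type*} [Group Γ] [MulAction Γ X]

lemma preimage_smul_iUnion_preimage_smul (S : Set X) (δ : Γ) :
    (δ • ·) ⁻¹' ⋃ γ : Γ, (γ • ·) ⁻¹' S = ⋃ γ : Γ, (γ • ·) ⁻¹' S := by
  ext x
  simp only [mem_preimage, mem_iUnion, smul_smul]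
  exact ((Equiv.mulRight δ).surjective.exists (p := fun γ : Γ => γ • x ∈ S)).symm

variable [MeasurableSpace X] [Countable Γ] [MeasurableConstSMul Γ X]

-- `U` is the saturation of `Bᶜ`, where the `ρ`-null set `B` is conull for every `σ.map (γ • ·)`.
lemma exists_invariant_separating_set {ρ σ : Measure X} (h : ∀ γ : Γ, ρ ⟂ₘ σ.map (γ • ·)) :
    ∃ U, MeasurableSet U ∧ (∀ γ : Γ, (γ • ·) ⁻¹' U = U) ∧ ρ Uᶜ = 0 ∧ σ U = 0 := by
  set B := ⋃ γ, (h γ).nullSet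
  have hB : MeasurableSet B := .iUnion fun γ => (h γ).measurableSet_nullSet
  have hσ : ∀ γ : Γ, σ ((γ • ·) ⁻¹' Bᶜ) = 0 := fun γ => by
    rw [← map_apply (measurable_const_smul γ) hB.compl]
    exact measure_mono_null (compl_subset_compl.2 (subset_iUnion _ γ))
      (h γ).measure_compl_nullSet
  refine ⟨⋃ γ : Γ, (γ • ·) ⁻¹' Bᶜ, .iUnion fun γ => measurable_const_smul γ hB.compl,
    preimage_smul_iUnion_preimage_smul _, ?_, measure_iUnion_null hσ⟩
  refine measure_mono_null ?_ (measure_iUnion_null fun γ => (h γ).measure_nullSet)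
  exact compl_subset_comm.1 (subset_iUnion_of_subset 1 fun x hx => by rwa [mem_preimage, one_smul])

end Separation

section Coupling

variable {X Γ : Type*} [MeasurableSpace X] [Group Γ] [Countable Γ] [MulAction Γ X]
  [MeasurableConstSMul Γ X]

lemma sum_greedy_eq_of_forall_invariant (e : ℕ → Γ) (μ ν : Measure X)
    [IsFiniteMeasure μ] [IsFiniteMeasure ν] (he : ∀ γ, ∃ᶠ n in atTop, e n = γ)
    (h : ∀ S : Set X, MeasurableSet S → (∀ γ : Γ, (γ • ·) ⁻¹' S = S) → μ S = ν S) :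
    Measure.sum (greedyPiece e μ ν) = μ ∧ Measure.sum (greedyImage e μ ν) = ν := by
  have hsep : ∀ γ : Γ, μ - Measure.sum (greedyPiece e μ ν) ⟂ₘ
      (ν - Measure.sum (greedyImage e μ ν)).map (γ • ·) := by
    intro γ
    have hinf := inf_sub_sum_greedy_eq_zero e μ ν he γ⁻¹
    rw [inv_inv] at hinf
    exact mutuallySingular_of_disjoint <| disjoint_iff_inf_le.2 <| hinf.le.trans (Measure.zero_le _)
  obtain ⟨U, hU, hUinv, hμU, hνU⟩ := exists_invariant_separating_set hsep
  have hμ0 : μ - Measure.sum (greedyPiece e μ ν) = 0 := by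
    rw [← measure_univ_eq_zero, ← union_compl_self U]
    refine measure_union_null ?_ hμU
    rw [sub_sum_greedy_apply_eq_of_invariant e μ ν hU hUinv (h U hU hUinv), hνU]
  have hν0 : ν - Measure.sum (greedyImage e μ ν) = 0 := by
    have hinv : ∀ γ : Γ, (γ • ·) ⁻¹' (univ : Set X) = univ := fun _ => preimage_univ
    rw [← measure_univ_eq_zero, ← sub_sum_greedy_apply_eq_of_invariant e μ ν .univ hinv
      (h univ .univ hinv), hμ0, coe_zero, Pi.zero_apply]
  have hμ := sum_le_of_add_sum_range_eq (fst_add_sum_greedyPiece e μ ν)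
  have hν := sum_le_of_add_sum_range_eq (snd_add_sum_greedyImage e μ ν)
  have := isFiniteMeasure_of_le μ hμ
  have := isFiniteMeasure_of_le ν hν
  exact ⟨by simpa [hμ0] using sub_add_cancel_of_le hμ,
    by simpa [hν0] using sub_add_cancel_of_le hν⟩

variable [MeasurableSpace Γ] [MeasurableSingletonClass Γ]

lemma measurable_smul_of_countable : Measurable fun p : Γ × X => p.1 • p.2 :=
  measurable_from_prod_countable_right measurable_const_smul

lemma map_smul_sum_map_prodMk {ι : Type*} (g : ι → Γ) (K : ι → Measure X) :
    (Measure.sum fun i => (K i).map (fun x => (g i, x))).map (fun p => p.1 • p.2) =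
      Measure.sum fun i => (K i).map (g i • ·) := by
  rw [Measure.map_sum measurable_smul_of_countable.aemeasurable]
  simp_rw [map_map measurable_smul_of_countable measurable_prodMk_left]
  rfl

lemma exists_seq_frequently_eq (α : Type*) [Countable α] [Nonempty α] :
    ∃ e : ℕ → α, ∀ a, ∃ᶠ n in atTop, e n = a := by
  obtain ⟨f, hf⟩ := exists_surjective_nat α
  refine ⟨fun n => f n.unpair.1, fun a => frequently_atTop.2 fun m => ?_⟩
  obtain ⟨k, rfl⟩ := hf a
  exact ⟨Nat.pair k m, Nat.right_le_pair k m, by simp⟩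

theorem exists_shift_coupling_of_forall_invariant (μ ν : Measure X) [IsFiniteMeasure μ]
    [IsFiniteMeasure ν]
    (h : ∀ S : Set X, MeasurableSet S → (∀ γ : Γ, (γ • ·) ⁻¹' S = S) → μ S = ν S) :
    ∃ lam : Measure (Γ × X), lam.map Prod.snd = μ ∧ lam.map (fun p => p.1 • p.2) = ν := by
  obtain ⟨e, he⟩ := exists_seq_frequently_eq Γ
  obtain ⟨hμ, hν⟩ := sum_greedy_eq_of_forall_invariant e μ ν he h
  exact ⟨Measure.sum fun n => (greedyPiece e μ ν n).map (fun x => (e n, x)),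
    (map_snd_sum_map_prodMk _ _).trans hμ, (map_smul_sum_map_prodMk _ _).trans hν⟩

theorem measure_eq_of_shift_coupling {lam : Measure (Γ × X)} {μ ν : Measure X}
    (hμ : lam.map Prod.snd = μ) (hν : lam.map (fun p => p.1 • p.2) = ν) {S : Set X}
    (hS : MeasurableSet S) (hinv : ∀ γ : Γ, (γ • ·) ⁻¹' S = S) : μ S = ν S := by
  have hpre : (fun p : Γ × X => p.1 • p.2) ⁻¹' S = Prod.snd ⁻¹' S := by
    ext ⟨γ, x⟩
    exact Set.ext_iff.1 (hinv γ) x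
  rw [← hμ, ← hν, map_apply measurable_snd hS, map_apply measurable_smul_of_countable hS, hpre]

end Coupling

theorem thorisson_coupling_general {X : Type*} [MeasurableSpace X]
    {Γ : Type*} [Group Γ] [Countable Γ] [MeasurableSpace Γ]
    [DiscreteMeasurableSpace Γ]
    (act : Γ → X → X) (hmeas : ∀ γ, Measurable (act γ))
    (hone : ∀ x, act 1 x = x)
    (hmul : ∀ γ δ x, act γ (act δ x) = act (γ * δ) x)
    (μ ν : Measure X) [IsProbabilityMeasure μ] [IsProbabilityMeasure ν] :
    (∀ S : Set X, MeasurableSet S → (∀ γ, act γ ⁻¹' S = S) → μ S = ν S) ↔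
      ∃ lam : Measure (Γ × X), IsProbabilityMeasure lam ∧
        lam.map Prod.snd = μ ∧ lam.map (fun p => act p.1 p.2) = ν := by
  let : MulAction Γ X :=
    { smul := act, one_smul := hone, mul_smul := fun γ δ x => (hmul γ δ x).symm }
  have : MeasurableConstSMul Γ X := ⟨hmeas⟩
  refine ⟨fun h => ?_, fun ⟨_, _, hμ, hν⟩ _ hS hinv => measure_eq_of_shift_coupling hμ hν hS hinv⟩
  obtain ⟨lam, hμ, hν⟩ := exists_shift_coupling_of_forall_invariant μ ν h
  have : IsProbabilityMeasure (lam.map Prod.snd) := hμ ▸ inferInstance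
  exact ⟨lam, isProbabilityMeasure_of_map Prod.snd, hμ, hν⟩

/-- Shift-coupling form of Thorisson's theorem: if a countable group `Γ` acts
on a standard Borel space `X` by Borel automorphisms and `μ`, `ν` are Borel
probability measures on `X`, then `μ` and `ν` agree on every `Γ`-invariant
Borel set iff there is a Borel probability measure `lam` on `Γ × X` with
`s_* lam = μ` and `t_* lam = ν`, where `s (γ, x) = x` and `t (γ, x) = γ x`. -/
theorem thorisson_coupling {X : Type*} [MeasurableSpace X] [StandardBorelSpace X]
    {Γ : Type*} [Group Γ] [Countable Γ] [MeasurableSpace Γ]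
    [DiscreteMeasurableSpace Γ]
    (act : Γ → X → X) (hmeas : ∀ γ, Measurable (act γ))
    (hone : ∀ x, act 1 x = x)
    (hmul : ∀ γ δ x, act γ (act δ x) = act (γ * δ) x)
    (μ ν : Measure X) [IsProbabilityMeasure μ] [IsProbabilityMeasure ν] :
    (∀ S : Set X, MeasurableSet S → (∀ γ, act γ ⁻¹' S = S) → μ S = ν S) ↔
      ∃ lam : Measure (Γ × X), IsProbabilityMeasure lam ∧
        lam.map Prod.snd = μ ∧ lam.map (fun p => act p.1 p.2) = ν :=
  thorisson_coupling_general act hmeas hone hmul μ ν
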